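/- arXiv:2011.08360 — 2 statements merged into one kernel-verified Lean document; each statement's English description precedes it below -/
import Mathlib

section
/- Let A : ℝ^{p₁×p₂} → ℝⁿ be a linear map with restricted isometry constants R_k. Let Z₁, Z₂ ∈ ℝ^{p₁×p₂} be matrices of ranks r₁ and r₂ respectively with ⟨Z₁, Z₂⟩ = 0 and r₁ + r₂ ≤ min(p₁,p₂). Then |⟨A(Z₁), A(Z₂)⟩| ≤ R_{r₁+r₂} ‖Z₁‖_F ‖Z₂‖_F. -/
/-!
Polarization: for orthogonal `Z₁, Z₂` the matrices `‖Z₂‖ Z₁ ± ‖Z₁‖ Z₂` have rank at most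
`r₁ + r₂` and the same Frobenius norm, and the difference of the squared norms of their images
is `4 ‖Z₁‖ ‖Z₂‖ ⟨A Z₁, A Z₂⟩`. Comparing the upper isometry bound for one with the lower bound for
the other gives the claim.
-/

open Matrix
noncomputable section

/-- Frobenius norm of a real matrix. -/
def frob {m n : Type*} [Fintype m] [Fintype n] (A : Matrix m n ℝ) : ℝ :=
  Real.sqrt (∑ i, ∑ j, (A i j) ^ 2)

/-- Spectral (operator ℓ²→ℓ²) norm of a real matrix. -/
def spec {m n : Type*} [Fintype m] [Fintype n] [DecidableEq n] (A : Matrix m n ℝ) : ℝ :=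
  ‖LinearMap.toContinuousLinearMap (Matrix.toEuclideanLin A)‖

/-- Nuclear norm: sum of singular values (square roots of eigenvalues of AᵀA). -/
def nuc {m n : Type*} [Fintype m] [Fintype n] [DecidableEq n] (A : Matrix m n ℝ) : ℝ :=
  ∑ i, Real.sqrt ((show (Aᵀ * A).IsHermitian by
    simpa [Matrix.conjTranspose_eq_transpose_of_trivial] using
      Matrix.isHermitian_conjTranspose_mul_self A).eigenvalues i)

open scoped InnerProductSpace

section RestrictedIsometry

variable {E F : Type*} [NormedAddCommGroup E] [InnerProductSpace ℝ E]
  [NormedAddCommGroup F] [InnerProductSpace ℝ F]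

theorem abs_inner_map_le_of_restricted_isometry (A : E →ₗ[ℝ] F) {R : ℝ} {x y : E}
    (hxy : ⟪x, y⟫_ℝ = 0)
    (hA : ∀ s t : ℝ, (1 - R) * ‖s • x + t • y‖ ^ 2 ≤ ‖A (s • x + t • y)‖ ^ 2 ∧
      ‖A (s • x + t • y)‖ ^ 2 ≤ (1 + R) * ‖s • x + t • y‖ ^ 2) :
    |⟪A x, A y⟫_ℝ| ≤ R * ‖x‖ * ‖y‖ := by
  rcases eq_or_ne x 0 with rfl | hx
  · simp
  rcases eq_or_ne y 0 with rfl | hy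
  · simp
  set a := ‖x‖
  set b := ‖y‖
  have hab : 0 < a * b := mul_pos (norm_pos_iff.2 hx) (norm_pos_iff.2 hy)
  -- `‖y‖ • x ± ‖x‖ • y` both have length `√2 ‖x‖ ‖y‖`
  have hnorm : ∀ ε : ℝ, ε ^ 2 = 1 → ‖b • x + (ε * a) • y‖ ^ 2 = 2 * (a * b) ^ 2 := by
    intro ε hε
    rw [norm_add_sq_real, real_inner_smul_left, real_inner_smul_right, hxy, norm_smul,
      norm_smul, Real.norm_eq_abs, Real.norm_eq_abs, mul_pow, mul_pow, sq_abs, sq_abs]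
    linear_combination (a * b) ^ 2 * hε
  have himage : ∀ ε : ℝ, ε ^ 2 = 1 → ‖A (b • x + (ε * a) • y)‖ ^ 2 =
      b ^ 2 * ‖A x‖ ^ 2 + a ^ 2 * ‖A y‖ ^ 2 + 2 * ε * (a * b) * ⟪A x, A y⟫_ℝ := by
    intro ε hε
    rw [map_add, map_smul, map_smul, norm_add_sq_real, real_inner_smul_left,
      real_inner_smul_right, norm_smul, norm_smul, Real.norm_eq_abs, Real.norm_eq_abs, mul_pow,
      mul_pow, sq_abs, sq_abs]
    linear_combination a ^ 2 * ‖A y‖ ^ 2 * hε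
  obtain ⟨hlo_plus, hup_plus⟩ := hA b (1 * a)
  obtain ⟨hlo_minus, hup_minus⟩ := hA b (-1 * a)
  rw [hnorm 1 (one_pow 2), himage 1 (one_pow 2)] at hlo_plus hup_plus
  rw [hnorm (-1) neg_one_sq, himage (-1) neg_one_sq] at hlo_minus hup_minus
  have hupper : a * b * ⟪A x, A y⟫_ℝ ≤ a * b * (R * a * b) := by linarith
  have hlower : a * b * -⟪A x, A y⟫_ℝ ≤ a * b * (R * a * b) := by linarith
  exact abs_le'.2 ⟨le_of_mul_le_mul_left hupper hab, le_of_mul_le_mul_left hlower hab⟩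

end RestrictedIsometry

namespace Matrix

section Rank

variable {m n K : Type*} [Fintype n] [Field K]

theorem rank_add_le (A B : Matrix m n K) : (A + B).rank ≤ A.rank + B.rank := by
  rw [rank, rank, rank, mulVecLin_add]
  exact (Submodule.finrank_mono (LinearMap.range_add_le _ _)).trans
    (Submodule.finrank_add_le_finrank_add_finrank _ _)

theorem rank_smul_le (c : K) (A : Matrix m n K) : (c • A).rank ≤ A.rank := by
  have : (c • A).mulVecLin = c • A.mulVecLin := by
    ext v : 1
    simp
  rw [rank, rank, this]
  exact Submodule.finrank_mono (LinearMap.range_smul_le_range _ _)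

theorem rank_smul_add_smul_le (s t : K) (A B : Matrix m n K) :
    (s • A + t • B).rank ≤ A.rank + B.rank :=
  (rank_add_le _ _).trans (add_le_add (rank_smul_le s A) (rank_smul_le t B))

end Rank

variable {m n : Type*} [Fintype m] [Fintype n]

def toEuclideanSpace : Matrix m n ℝ ≃ₗ[ℝ] EuclideanSpace ℝ (m × n) :=
  (ofLinearEquiv ℝ).symm ≪≫ₗ (LinearEquiv.curry ℝ ℝ m n).symm ≪≫ₗ
    (WithLp.linearEquiv 2 ℝ _).symm

theorem inner_toEuclideanSpace (X Y : Matrix m n ℝ) :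
    ⟪toEuclideanSpace X, toEuclideanSpace Y⟫_ℝ = ∑ i, ∑ j, X i j * Y i j := by
  simp [toEuclideanSpace, PiLp.inner_apply, Fintype.sum_prod_type, mul_comm]

theorem norm_toEuclideanSpace (X : Matrix m n ℝ) : ‖toEuclideanSpace X‖ = frob X := by
  rw [frob, ← Real.sqrt_sq (norm_nonneg _), EuclideanSpace.real_norm_sq_eq]
  simp [toEuclideanSpace, Fintype.sum_prod_type]

end Matrix

theorem stmt_3_general {p₁ p₂ n r₁ r₂ : ℕ}
    (A : Matrix (Fin p₁) (Fin p₂) ℝ →ₗ[ℝ] (Fin n → ℝ))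
    (R : ℝ)
    (hRIP : ∀ Z : Matrix (Fin p₁) (Fin p₂) ℝ, Z.rank ≤ r₁ + r₂ →
      (1 - R) * frob Z ^ 2 ≤ ∑ i, A Z i ^ 2 ∧ ∑ i, A Z i ^ 2 ≤ (1 + R) * frob Z ^ 2)
    (Z₁ Z₂ : Matrix (Fin p₁) (Fin p₂) ℝ)
    (h₁ : Z₁.rank = r₁) (h₂ : Z₂.rank = r₂)
    (horth : ∑ i, ∑ j, Z₁ i j * Z₂ i j = 0) :
    |∑ i, A Z₁ i * A Z₂ i| ≤ R * frob Z₁ * frob Z₂ := by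
  let Φ := Matrix.toEuclideanSpace (m := Fin p₁) (n := Fin p₂)
  let A' := (WithLp.linearEquiv 2 ℝ (Fin n → ℝ)).symm.toLinearMap ∘ₗ A ∘ₗ Φ.symm.toLinearMap
  have hRIP' : ∀ s t : ℝ, (1 - R) * ‖s • Φ Z₁ + t • Φ Z₂‖ ^ 2 ≤ ‖A' (s • Φ Z₁ + t • Φ Z₂)‖ ^ 2 ∧
      ‖A' (s • Φ Z₁ + t • Φ Z₂)‖ ^ 2 ≤ (1 + R) * ‖s • Φ Z₁ + t • Φ Z₂‖ ^ 2 := by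
    intro s t
    have hrank := Matrix.rank_smul_add_smul_le s t Z₁ Z₂
    rw [h₁, h₂] at hrank
    rw [← map_smul, ← map_smul, ← map_add, Matrix.norm_toEuclideanSpace,
      EuclideanSpace.real_norm_sq_eq]
    simpa [A'] using hRIP _ hrank
  have hbound := abs_inner_map_le_of_restricted_isometry A'
    (by rwa [Matrix.inner_toEuclideanSpace]) hRIP'
  rw [Matrix.norm_toEuclideanSpace, Matrix.norm_toEuclideanSpace] at hbound
  simpa [A', PiLp.inner_apply, mul_comm] using hbound

/-- Restricted orthogonality: for orthogonal low-rank matrices Z₁, Z₂,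
|⟨A(Z₁), A(Z₂)⟩| ≤ R_{r₁+r₂} ‖Z₁‖_F ‖Z₂‖_F. -/
theorem stmt_3 {p₁ p₂ n r₁ r₂ : ℕ}
    (A : Matrix (Fin p₁) (Fin p₂) ℝ →ₗ[ℝ] (Fin n → ℝ))
    (R : ℝ)
    (hRIP : ∀ Z : Matrix (Fin p₁) (Fin p₂) ℝ, Z.rank ≤ r₁ + r₂ →
      (1 - R) * frob Z ^ 2 ≤ ∑ i, A Z i ^ 2 ∧ ∑ i, A Z i ^ 2 ≤ (1 + R) * frob Z ^ 2)
    (Z₁ Z₂ : Matrix (Fin p₁) (Fin p₂) ℝ)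
    (h₁ : Z₁.rank = r₁) (h₂ : Z₂.rank = r₂)
    (horth : ∑ i, ∑ j, Z₁ i j * Z₂ i j = 0)
    (hr : r₁ + r₂ ≤ min p₁ p₂) :
    |∑ i, A Z₁ i * A Z₂ i| ≤ R * frob Z₁ * frob Z₂ :=
  stmt_3_general A R hRIP Z₁ Z₂ h₁ h₂ horth
end
end

section
/- Let X₁ = U₁ Σ₁ V₁ᵀ and X₂ = U₂ Σ₂ V₂ᵀ be two rank-r matrices in ℝ^{p₁×p₂} with their singular value decompositions. Then ‖U₁U₁ᵀ − U₂U₂ᵀ‖ ≤ ‖X₁ − X₂‖ / max(σ_r(X₁), σ_r(X₂)), where ‖·‖ is the spectral norm and σ_r denotes the r-th largest singular value. -/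
/-!
Write `Pᵢ = UᵢUᵢᴴ`. Since `P₁ - P₂ = P₁(1 - P₂) - (1 - P₁)P₂` and the two terms have orthogonal
ranges, `‖P₁ - P₂‖ ≤ max ‖(1 - P₂)U₁‖ ‖(1 - P₁)U₂‖`. Because `U₁` and `U₂` have the same number
of columns, the two norms are equal: with `g = U₁ᴴU₂` their squares are `‖1 - gᴴg‖` and
`‖1 - ggᴴ‖`, and the Hermitian matrices `gᴴg`, `ggᴴ` have the same spectrum. Finally
`(1 - P₁)X₁ = 0` and `U₂ = X₂V₂Σ₂⁻¹` give `(1 - P₁)U₂ = (1 - P₁)(X₂ - X₁)V₂Σ₂⁻¹`, whose norm is at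
most `‖X₁ - X₂‖ / σ_r(X₂)`; exchanging the roles of `X₁` and `X₂` gives the bound with `σ_r(X₁)`.
-/

open Matrix
noncomputable section

open scoped Matrix.Norms.L2Operator InnerProductSpace

section StarProjection

variable {𝕜 E : Type*} [RCLike 𝕜] [NormedAddCommGroup E] [InnerProductSpace 𝕜 E] [CompleteSpace E]
  {p q : E →L[𝕜] E}

open ContinuousLinearMap

theorem IsStarProjection.inner_apply_one_sub_apply_eq_zero (hp : IsStarProjection p) (x y : E) :
    ⟪p x, (1 - p) y⟫_𝕜 = 0 := by
  rw [← adjoint_inner_right, ← star_eq_adjoint, hp.isSelfAdjoint.star_eq, ← mul_apply_eq_comp,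
    hp.mul_one_sub_self, _root_.zero_apply, inner_zero_right]

theorem IsStarProjection.norm_sq_apply_add_norm_sq_one_sub_apply (hp : IsStarProjection p)
    (x : E) : ‖p x‖ ^ 2 + ‖(1 - p) x‖ ^ 2 = ‖x‖ ^ 2 := by
  have h := norm_add_sq_eq_norm_sq_add_norm_sq_of_inner_eq_zero _ _
    (hp.inner_apply_one_sub_apply_eq_zero x x)
  rw [_root_.sub_apply, one_apply_eq_self, add_sub_cancel] at h
  rw [sq, sq, sq, h, _root_.sub_apply, one_apply_eq_self]

theorem ContinuousLinearMap.norm_sub_le_max_of_isStarProjection (hp : IsStarProjection p)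
    (hq : IsStarProjection q) : ‖p - q‖ ≤ max ‖p * (1 - q)‖ ‖(1 - p) * q‖ := by
  set c := max ‖p * (1 - q)‖ ‖(1 - p) * q‖
  refine opNorm_le_bound _ ((norm_nonneg _).trans (le_max_left _ _)) fun x ↦ ?_
  set u := p ((1 - q) x)
  set v := (1 - p) (q x)
  have hsplit : (p - q) x = u + -v := by
    simp only [u, v, _root_.sub_apply, one_apply_eq_self, map_sub]
    abel
  have horth : ⟪u, -v⟫_𝕜 = 0 := by
    rw [inner_neg_right, hp.inner_apply_one_sub_apply_eq_zero, neg_zero]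
  have hu : ‖u‖ ≤ c * ‖(1 - q) x‖ :=
    calc ‖u‖ = ‖(p * (1 - q)) ((1 - q) x)‖ := by
          rw [mul_apply_eq_comp, ← mul_apply_eq_comp (1 - q), hq.one_sub.isIdempotentElem.eq]
      _ ≤ ‖p * (1 - q)‖ * ‖(1 - q) x‖ := le_opNorm _ _
      _ ≤ c * ‖(1 - q) x‖ := by gcongr; exact le_max_left _ _
  have hv : ‖v‖ ≤ c * ‖q x‖ :=
    calc ‖v‖ = ‖((1 - p) * q) (q x)‖ := by
          rw [mul_apply_eq_comp, ← mul_apply_eq_comp q, hq.isIdempotentElem.eq]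
      _ ≤ ‖(1 - p) * q‖ * ‖q x‖ := le_opNorm _ _
      _ ≤ c * ‖q x‖ := by gcongr; exact le_max_right _ _
  have hsq := norm_add_sq_eq_norm_sq_add_norm_sq_of_inner_eq_zero _ _ horth
  rw [norm_neg] at hsq
  refine le_of_sq_le_sq ?_ (by positivity)
  calc ‖(p - q) x‖ ^ 2 = ‖u‖ ^ 2 + ‖v‖ ^ 2 := by rw [hsplit, sq, hsq, sq, sq]
    _ ≤ (c * ‖(1 - q) x‖) ^ 2 + (c * ‖q x‖) ^ 2 := by gcongr
    _ = (c * ‖x‖) ^ 2 := by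
      linear_combination c ^ 2 * hq.norm_sq_apply_add_norm_sq_one_sub_apply x

end StarProjection

namespace Matrix

variable {𝕜 : Type*} [RCLike 𝕜] {l m n p : Type*} [Fintype l] [Fintype m] [Fintype n] [Fintype p]
  [DecidableEq n]

theorem spectrum_mul_comm {K : Type*} [Field K] (A B : Matrix n n K) :
    spectrum K (A * B) = spectrum K (B * A) := by
  ext r
  rcases eq_or_ne r 0 with rfl | hr
  · simp only [spectrum.zero_mem_iff, isUnit_iff_isUnit_det, det_mul, mul_comm]
  · have h := Set.ext_iff.mp (spectrum.nonzero_mul_comm A B) r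
    simpa [hr] using h

theorem IsHermitian.spectralRadius_eq_l2_opNNNorm {A : Matrix n n 𝕜} (hA : A.IsHermitian) :
    spectralRadius 𝕜 A = ‖A‖₊ := by
  rw [spectralRadius, ← AlgEquiv.spectrum_eq (toEuclideanCLM (𝕜 := 𝕜) (n := n)) A]
  exact ContinuousLinearMap.spectralRadius_eq_nnnorm _ (hA.isSelfAdjoint.map _)

theorem l2_opNorm_one_sub_conjTranspose_mul_self_comm (g : Matrix n n 𝕜) :
    ‖1 - gᴴ * g‖ = ‖1 - g * gᴴ‖ := by
  have hspec : spectrum 𝕜 (1 - gᴴ * g) = spectrum 𝕜 (1 - g * gᴴ) := by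
    rw [← map_one (algebraMap 𝕜 (Matrix n n 𝕜)), ← spectrum.singleton_sub_eq,
      ← spectrum.singleton_sub_eq, spectrum_mul_comm]
  have h₁ := isHermitian_one.sub (isHermitian_conjTranspose_mul_self g)
  have h₂ := isHermitian_one.sub (isHermitian_mul_conjTranspose_self g)
  have h : (‖1 - gᴴ * g‖₊ : ENNReal) = ‖1 - g * gᴴ‖₊ := by
    rw [← h₁.spectralRadius_eq_l2_opNNNorm, ← h₂.spectralRadius_eq_l2_opNNNorm, spectralRadius,
      spectralRadius, hspec]
  exact congrArg NNReal.toReal (ENNReal.coe_injective h)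

theorem l2_opNorm_sub_le_max_of_isStarProjection {P Q : Matrix n n 𝕜} (hP : IsStarProjection P)
    (hQ : IsStarProjection Q) : ‖P - Q‖ ≤ max ‖P * (1 - Q)‖ ‖(1 - P) * Q‖ := by
  simpa only [cstar_norm_def, map_sub, map_mul, map_one] using
    ContinuousLinearMap.norm_sub_le_max_of_isStarProjection (hP.map toEuclideanCLM)
      (hQ.map toEuclideanCLM)

theorem isStarProjection_mul_conjTranspose_self {U : Matrix m n 𝕜} (hU : Uᴴ * U = 1) :
    IsStarProjection (U * Uᴴ) where
  isIdempotentElem := by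
    rw [IsIdempotentElem, Matrix.mul_assoc, ← Matrix.mul_assoc Uᴴ, hU, Matrix.one_mul]
  isSelfAdjoint := (isHermitian_mul_conjTranspose_self U).isSelfAdjoint

theorem l2_opNorm_le_one_of_conjTranspose_mul_self_eq_one {U : Matrix m n 𝕜} (hU : Uᴴ * U = 1) :
    ‖U‖ ≤ 1 := by
  have h : ‖U‖ * ‖U‖ ≤ 1 := by
    rw [← l2_opNorm_conjTranspose_mul_self, hU]
    exact IsStarProjection.norm_le _ (IsStarProjection.one _)
  nlinarith [norm_nonneg U]

variable [DecidableEq p]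

theorem l2_opNorm_mul_le_div_of_eq_mul_diagonal_mul {X : Matrix m p 𝕜} {U : Matrix m n 𝕜}
    {V : Matrix p n 𝕜} {d : n → 𝕜} {s : ℝ} (hX : X = U * diagonal d * Vᴴ) (hV : Vᴴ * V = 1)
    (hs : 0 < s) (hd : ∀ i, s ≤ ‖d i‖) (A : Matrix l m 𝕜) : ‖A * U‖ ≤ ‖A * X‖ / s := by
  have hU : U = X * V * diagonal d⁻¹ := by
    have hdd : (fun i ↦ d i * d⁻¹ i) = fun _ ↦ 1 :=
      funext fun i ↦ mul_inv_cancel₀ (norm_pos_iff.mp (hs.trans_le (hd i)))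
    rw [hX, Matrix.mul_assoc _ Vᴴ, hV, Matrix.mul_one, Matrix.mul_assoc, diagonal_mul_diagonal,
      hdd, diagonal_one, Matrix.mul_one]
  have hdiag : ‖(diagonal d⁻¹ : Matrix n n 𝕜)‖ ≤ s⁻¹ := by
    rw [l2_opNorm_diagonal, pi_norm_le_iff_of_nonneg (inv_nonneg.mpr hs.le)]
    intro i
    rw [Pi.inv_apply, norm_inv]
    exact inv_anti₀ hs (hd i)
  calc ‖A * U‖ ≤ ‖A * X‖ * ‖V‖ * ‖(diagonal d⁻¹ : Matrix n n 𝕜)‖ := by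
        rw [hU, ← Matrix.mul_assoc, ← Matrix.mul_assoc]
        exact (l2_opNorm_mul _ _).trans (by gcongr; exact l2_opNorm_mul _ _)
    _ ≤ ‖A * X‖ * 1 * s⁻¹ := by
        gcongr
        exact l2_opNorm_le_one_of_conjTranspose_mul_self_eq_one hV
    _ = ‖A * X‖ / s := by rw [mul_one, div_eq_mul_inv]

variable [DecidableEq m]

theorem l2_opNorm_mul_mul_conjTranspose_self_le (A : Matrix l m 𝕜) {U : Matrix m n 𝕜}
    (hU : Uᴴ * U = 1) : ‖A * (U * Uᴴ)‖ ≤ ‖A * U‖ :=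
  calc ‖A * (U * Uᴴ)‖ ≤ ‖A * U‖ * ‖Uᴴ‖ := by rw [← Matrix.mul_assoc]; exact l2_opNorm_mul _ _
    _ ≤ ‖A * U‖ := by
      rw [l2_opNorm_conjTranspose]
      exact mul_le_of_le_one_right (norm_nonneg _)
        (l2_opNorm_le_one_of_conjTranspose_mul_self_eq_one hU)

theorem conjTranspose_mul_self_one_sub_mul_conjTranspose_self_mul {V W : Matrix m n 𝕜}
    (hV : Vᴴ * V = 1) (hW : Wᴴ * W = 1) :
    ((1 - V * Vᴴ) * W)ᴴ * ((1 - V * Vᴴ) * W) = 1 - (Vᴴ * W)ᴴ * (Vᴴ * W) := by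
  have hQ := (isStarProjection_mul_conjTranspose_self hV).one_sub
  calc ((1 - V * Vᴴ) * W)ᴴ * ((1 - V * Vᴴ) * W)
      = Wᴴ * ((1 - V * Vᴴ)ᴴ * (1 - V * Vᴴ)) * W := by
        simp only [conjTranspose_mul, Matrix.mul_assoc]
    _ = Wᴴ * (1 - V * Vᴴ) * W := by
        rw [← star_eq_conjTranspose, hQ.isSelfAdjoint.star_eq, hQ.isIdempotentElem.eq]
    _ = 1 - (Vᴴ * W)ᴴ * (Vᴴ * W) := by
        simp only [Matrix.mul_sub, Matrix.sub_mul, Matrix.mul_one, hW, conjTranspose_mul,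
          conjTranspose_conjTranspose, Matrix.mul_assoc]

theorem l2_opNorm_one_sub_mul_conjTranspose_self_mul_comm {U₁ U₂ : Matrix m n 𝕜}
    (hU₁ : U₁ᴴ * U₁ = 1) (hU₂ : U₂ᴴ * U₂ = 1) :
    ‖(1 - U₁ * U₁ᴴ) * U₂‖ = ‖(1 - U₂ * U₂ᴴ) * U₁‖ := by
  refine (mul_self_inj (norm_nonneg _) (norm_nonneg _)).mp ?_
  rw [← l2_opNorm_conjTranspose_mul_self, ← l2_opNorm_conjTranspose_mul_self,
    conjTranspose_mul_self_one_sub_mul_conjTranspose_self_mul hU₁ hU₂,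
    conjTranspose_mul_self_one_sub_mul_conjTranspose_self_mul hU₂ hU₁,
    l2_opNorm_one_sub_conjTranspose_mul_self_comm]
  simp only [conjTranspose_mul, conjTranspose_conjTranspose]

theorem l2_opNorm_mul_conjTranspose_self_sub_le {U₁ U₂ : Matrix m n 𝕜} (hU₁ : U₁ᴴ * U₁ = 1)
    (hU₂ : U₂ᴴ * U₂ = 1) : ‖U₁ * U₁ᴴ - U₂ * U₂ᴴ‖ ≤ ‖(1 - U₁ * U₁ᴴ) * U₂‖ := by
  have hP₁ := isStarProjection_mul_conjTranspose_self hU₁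
  have hP₂ := isStarProjection_mul_conjTranspose_self hU₂
  refine (l2_opNorm_sub_le_max_of_isStarProjection hP₁ hP₂).trans (max_le ?_ ?_)
  · calc ‖U₁ * U₁ᴴ * (1 - U₂ * U₂ᴴ)‖ = ‖(1 - U₂ * U₂ᴴ) * (U₁ * U₁ᴴ)‖ := by
          rw [← l2_opNorm_conjTranspose, conjTranspose_mul, ← star_eq_conjTranspose,
            ← star_eq_conjTranspose, hP₁.isSelfAdjoint.star_eq, hP₂.one_sub.isSelfAdjoint.star_eq]
      _ ≤ ‖(1 - U₂ * U₂ᴴ) * U₁‖ := l2_opNorm_mul_mul_conjTranspose_self_le _ hU₁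
      _ = ‖(1 - U₁ * U₁ᴴ) * U₂‖ := (l2_opNorm_one_sub_mul_conjTranspose_self_mul_comm hU₁ hU₂).symm
  · exact l2_opNorm_mul_mul_conjTranspose_self_le _ hU₂

theorem l2_opNorm_mul_conjTranspose_self_sub_le_div {X₁ X₂ : Matrix m p 𝕜}
    {U₁ U₂ : Matrix m n 𝕜} {M : Matrix n p 𝕜} {V₂ : Matrix p n 𝕜} {d₂ : n → 𝕜} {s : ℝ}
    (hX₁ : X₁ = U₁ * M) (hX₂ : X₂ = U₂ * diagonal d₂ * V₂ᴴ) (hU₁ : U₁ᴴ * U₁ = 1)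
    (hU₂ : U₂ᴴ * U₂ = 1) (hV₂ : V₂ᴴ * V₂ = 1) (hs : 0 < s) (hd₂ : ∀ i, s ≤ ‖d₂ i‖) :
    ‖U₁ * U₁ᴴ - U₂ * U₂ᴴ‖ ≤ ‖X₁ - X₂‖ / s := by
  have hQX₁ : (1 - U₁ * U₁ᴴ) * X₁ = 0 := by
    rw [hX₁, ← Matrix.mul_assoc, Matrix.sub_mul, Matrix.mul_assoc U₁, hU₁, Matrix.one_mul,
      Matrix.mul_one, sub_self, Matrix.zero_mul]
  calc ‖U₁ * U₁ᴴ - U₂ * U₂ᴴ‖ ≤ ‖(1 - U₁ * U₁ᴴ) * U₂‖ :=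
        l2_opNorm_mul_conjTranspose_self_sub_le hU₁ hU₂
    _ ≤ ‖(1 - U₁ * U₁ᴴ) * X₂‖ / s :=
        l2_opNorm_mul_le_div_of_eq_mul_diagonal_mul hX₂ hV₂ hs hd₂ _
    _ = ‖(1 - U₁ * U₁ᴴ) * (X₂ - X₁)‖ / s := by rw [Matrix.mul_sub, hQX₁, sub_zero]
    _ ≤ ‖X₁ - X₂‖ / s := by
        gcongr
        rw [norm_sub_rev]
        refine (l2_opNorm_mul _ _).trans (mul_le_of_le_one_left (norm_nonneg _) ?_)
        exact IsStarProjection.norm_le _ (isStarProjection_mul_conjTranspose_self hU₁).one_sub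

end Matrix

theorem stmt_5_general {p₁ p₂ r : ℕ} (hr : 0 < r)
    (X₁ X₂ : Matrix (Fin p₁) (Fin p₂) ℝ)
    (U₁ U₂ : Matrix (Fin p₁) (Fin r) ℝ) (V₁ V₂ : Matrix (Fin p₂) (Fin r) ℝ)
    (σ₁ σ₂ : Fin r → ℝ)
    (hX₁ : X₁ = U₁ * Matrix.diagonal σ₁ * V₁ᵀ)
    (hX₂ : X₂ = U₂ * Matrix.diagonal σ₂ * V₂ᵀ)
    (hU₁ : U₁ᵀ * U₁ = 1) (hU₂ : U₂ᵀ * U₂ = 1)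
    (hV₁ : V₁ᵀ * V₁ = 1) (hV₂ : V₂ᵀ * V₂ = 1)
    (hσ₁ : Antitone σ₁) (hσ₂ : Antitone σ₂)
    (hσ₁pos : ∀ i, 0 < σ₁ i) (hσ₂pos : ∀ i, 0 < σ₂ i) :
    spec (U₁ * U₁ᵀ - U₂ * U₂ᵀ) ≤
      spec (X₁ - X₂) /
        max (σ₁ ⟨r - 1, Nat.sub_lt hr one_pos⟩) (σ₂ ⟨r - 1, Nat.sub_lt hr one_pos⟩) := by
  simp only [← conjTranspose_eq_transpose_of_trivial] at hX₁ hX₂ hU₁ hU₂ hV₁ hV₂ ⊢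
  have hlast : ∀ σ : Fin r → ℝ, Antitone σ → ∀ i, σ ⟨r - 1, Nat.sub_lt hr one_pos⟩ ≤ ‖σ i‖ :=
    fun σ hσ i ↦ (hσ (Fin.le_def.mpr (Nat.le_sub_one_of_lt i.isLt))).trans (Real.le_norm_self _)
  have h₂ := l2_opNorm_mul_conjTranspose_self_sub_le_div (hX₁.trans (Matrix.mul_assoc _ _ _)) hX₂
    hU₁ hU₂ hV₂ (hσ₂pos _) (hlast σ₂ hσ₂)
  have h₁ := l2_opNorm_mul_conjTranspose_self_sub_le_div (hX₂.trans (Matrix.mul_assoc _ _ _)) hX₁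
    hU₂ hU₁ hV₁ (hσ₁pos _) (hlast σ₁ hσ₁)
  rw [norm_sub_rev, norm_sub_rev X₂] at h₁
  -- `spec` is definitionally the `Matrix.Norms.L2Operator` norm
  show ‖_‖ ≤ ‖_‖ / _
  rcases le_total (σ₁ ⟨r - 1, Nat.sub_lt hr one_pos⟩) (σ₂ ⟨r - 1, Nat.sub_lt hr one_pos⟩) with h | h
  · rwa [max_eq_right h]
  · rwa [max_eq_left h]

/-- Perturbation bound for singular subspaces:
‖U₁U₁ᵀ − U₂U₂ᵀ‖ ≤ ‖X₁ − X₂‖ / max(σ_r(X₁), σ_r(X₂)). -/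
theorem stmt_5 {p₁ p₂ r : ℕ} (hr : 0 < r)
    (X₁ X₂ : Matrix (Fin p₁) (Fin p₂) ℝ)
    (U₁ U₂ : Matrix (Fin p₁) (Fin r) ℝ) (V₁ V₂ : Matrix (Fin p₂) (Fin r) ℝ)
    (σ₁ σ₂ : Fin r → ℝ)
    (hX₁ : X₁ = U₁ * Matrix.diagonal σ₁ * V₁ᵀ)
    (hX₂ : X₂ = U₂ * Matrix.diagonal σ₂ * V₂ᵀ)
    (hU₁ : U₁ᵀ * U₁ = 1) (hU₂ : U₂ᵀ * U₂ = 1)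
    (hV₁ : V₁ᵀ * V₁ = 1) (hV₂ : V₂ᵀ * V₂ = 1)
    (hσ₁ : Antitone σ₁) (hσ₂ : Antitone σ₂)
    (hσ₁pos : ∀ i, 0 < σ₁ i) (hσ₂pos : ∀ i, 0 < σ₂ i)
    (hrank₁ : X₁.rank = r) (hrank₂ : X₂.rank = r) :
    spec (U₁ * U₁ᵀ - U₂ * U₂ᵀ) ≤
      spec (X₁ - X₂) /
        max (σ₁ ⟨r - 1, Nat.sub_lt hr one_pos⟩) (σ₂ ⟨r - 1, Nat.sub_lt hr one_pos⟩) :=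
  stmt_5_general hr X₁ X₂ U₁ U₂ V₁ V₂ σ₁ σ₂ hX₁ hX₂ hU₁ hU₂ hV₁ hV₂ hσ₁ hσ₂ hσ₁pos hσ₂pos
end
end
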